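/- Let χ : {1,…,n} → {ℓ,c,r} and π = {V₁,…,V_t} ∈ IBNC(χ). Then the interval [0ₙ, π] = {σ ∈ IBNC(χ) : 0ₙ ≤ σ ≤ π} in the lattice IBNC(χ), where 0ₙ is the partition of {1,…,n} into n singleton blocks, is lattice isomorphic to the product IBNC(χ|_{V₁}) × ⋯ × IBNC(χ|_{V_t}) via σ ↦ (σ|_{V₁},…,σ|_{V_t}). -/
import Mathlib


namespace FFB

/-- The three letters ℓ, c, r labelling the faces. -/
inductive Letter : Type where
  | l | c | r
deriving DecidableEq

/-- `x` is one of the letters `ℓ`, `c`. -/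
def isLC (x : Letter) : Prop := x = Letter.l ∨ x = Letter.c

variable {α : Type*}

/-- The total order `≺_χ` on the index set determined by `χ`:
the elements of `χ⁻¹{ℓ,c}` in increasing order followed by the elements of
`χ⁻¹{r}` in decreasing order. -/
def chiLT [LT α] (χ : α → Letter) (i j : α) : Prop :=
  (isLC (χ i) ∧ isLC (χ j) ∧ i < j)
  ∨ (isLC (χ i) ∧ χ j = Letter.r)
  ∨ (χ i = Letter.r ∧ χ j = Letter.r ∧ j < i)

/-- A partition (equivalence relation) `π` is `χ`-noncrossing if there is no quadruple
`s₁ ≺_χ r₁ ≺_χ s₂ ≺_χ r₂` with `s₁ ∼ s₂`, `r₁ ∼ r₂` lying in different blocks. -/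
def ChiNoncrossing [LT α] (χ : α → Letter) (π : Setoid α) : Prop :=
  ∀ s₁ r₁ s₂ r₂ : α, chiLT χ s₁ r₁ → chiLT χ r₁ s₂ → chiLT χ s₂ r₂ →
    π s₁ s₂ → π r₁ r₂ → π s₁ r₁

/-- A partition `π` is `χ`-interval if whenever `i < j < k`, `i ∼ k` and `χ j = c`,
then `i, j, k` all lie in the same block. -/
def ChiInterval [LT α] (χ : α → Letter) (π : Setoid α) : Prop :=
  ∀ i j k : α, i < j → j < k → χ j = Letter.c → π i k → π i j

/-- The set of interval-bi-noncrossing partitions with respect to `χ`. -/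
def IBNC [LT α] (χ : α → Letter) : Set (Setoid α) :=
  {π | ChiNoncrossing χ π ∧ ChiInterval χ π}

/-- The set of `χ`-noncrossing partitions. -/
def NC [LT α] (χ : α → Letter) : Set (Setoid α) :=
  {π | ChiNoncrossing χ π}

/-- Restriction of a partition of `α` to a subset `V ⊆ α`. -/
def restrict (V : Set α) (σ : Setoid α) : Setoid V := Setoid.comap Subtype.val σ

/-- Restriction of `χ` to a subset `V ⊆ α`. -/
def restChi (V : Set α) (χ : α → Letter) : V → Letter := fun x => χ x.1

/- `mu` is the Möbius function of the finite poset `P` (with the induced order):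
it is the (two-sided) convolution inverse of the zeta function. -/
open Classical in
def IsMobius {β : Type*} [PartialOrder β] (P : Set β) (mu : β → β → ℂ) : Prop :=
  ∀ a ∈ P, ∀ b ∈ P, a ≤ b →
    ((∑ᶠ c ∈ {c | c ∈ P ∧ a ≤ c ∧ c ≤ b}, mu a c) = if a = b then 1 else 0) ∧
    ((∑ᶠ c ∈ {c | c ∈ P ∧ a ≤ c ∧ c ≤ b}, mu c b) = if a = b then 1 else 0)

section Moments

variable {A : Type*} [Ring A] [LinearOrder α] [Finite α]

/-- `φ_V(z₁,…,zₙ) = φ(z_{l₁} ⋯ z_{l_k})` where `V = {l₁ < ⋯ < l_k}`. -/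
noncomputable def phiV (φ : A → ℂ) (z : α → A) (V : Set α) : ℂ :=
  φ (((Set.toFinite V).toFinset.sort (· ≤ ·)).map z).prod

/-- `φ_σ(z₁,…,zₙ) = ∏_{V ∈ σ} φ_V(z₁,…,zₙ)`. -/
noncomputable def phiPart (φ : A → ℂ) (z : α → A) (σ : Setoid α) : ℂ :=
  ∏ᶠ q : Quotient σ, phiV φ z {y | Quotient.mk σ y = q}

/-- The free-free-Boolean cumulant
`κ_{χ,π}(z₁,…,zₙ) = Σ_{σ ∈ IBNC(χ), σ ≤ π} μ_{IBNC(χ)}(σ,π) φ_σ(z₁,…,zₙ)`,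
where `mu` is (a function which is) the Möbius function of `IBNC(χ)`. -/
noncomputable def cum (φ : A → ℂ) (χ : α → Letter)
    (mu : Setoid α → Setoid α → ℂ) (z : α → A) (π : Setoid α) : ℂ :=
  ∑ᶠ σ ∈ {σ | σ ∈ IBNC χ ∧ σ ≤ π}, mu σ π * phiPart φ z σ

end Moments

/-- Combinatorial free-free-Boolean independence: mixed cumulants vanish.
`F i x` is the face of the `i`-th triple labelled by the letter `x`. -/
def CombFFB {A : Type*} [Ring A] [Algebra ℂ A] (φ : A →ₗ[ℂ] ℂ) {I : Type*}
    (F : I → Letter → NonUnitalSubalgebra ℂ A) : Prop :=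
  ∀ (n : ℕ) (χ : Fin n → Letter) (ω : Fin n → I) (z : Fin n → A),
    (∀ k, z k ∈ F (ω k) (χ k)) → (¬ ∃ i, ∀ k, ω k = i) →
    ∀ mu : Setoid (Fin n) → Setoid (Fin n) → ℂ, IsMobius (IBNC χ) mu →
      cum (⇑φ) χ mu z ⊤ = 0

end FFB

namespace FFB

section Aux

variable {n : ℕ}

lemma restrict_rel (V : Set (Fin n)) (σ : Setoid (Fin n)) (x y : V) :
    (restrict V σ) x y ↔ σ x.1 y.1 := Iff.rfl

lemma chiLT_rest (χ : Fin n → Letter) (V : Set (Fin n)) (x y : V) :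
    chiLT (restChi V χ) x y ↔ chiLT χ x.1 y.1 := Iff.rfl

lemma restrict_mem_IBNC (χ : Fin n → Letter) (V : Set (Fin n))
    {σ : Setoid (Fin n)} (h : σ ∈ IBNC χ) : restrict V σ ∈ IBNC (restChi V χ) := by
  obtain ⟨hnc, hiv⟩ := h
  exact ⟨fun s₁ r₁ s₂ r₂ h1 h2 h3 hs hr => hnc s₁.1 r₁.1 s₂.1 r₂.1 h1 h2 h3 hs hr,
    fun i j k hij hjk hc hik => hiv i.1 j.1 k.1 hij hjk hc hik⟩

/-- Glue a family of partitions of the blocks of `π` into a partition of `Fin n`. -/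
def glue (π : Setoid (Fin n))
    (ρ : ∀ q : Quotient π, Setoid {y | Quotient.mk π y = q}) : Setoid (Fin n) where
  r a b := ∃ (q : Quotient π) (ha : Quotient.mk π a = q) (hb : Quotient.mk π b = q),
    ρ q ⟨a, ha⟩ ⟨b, hb⟩
  iseqv := by
    refine ⟨fun a => ⟨Quotient.mk π a, rfl, rfl, (ρ _).refl _⟩, ?_, ?_⟩
    · rintro a b ⟨q, ha, hb, h⟩
      exact ⟨q, hb, ha, (ρ q).symm h⟩
    · rintro a b c ⟨q, ha, hb, h⟩ ⟨q', hb', hc, h'⟩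
      obtain rfl : q = q' := hb.symm.trans hb'
      exact ⟨q, ha, hc, (ρ q).trans h h'⟩

lemma glue_rel_pi {π : Setoid (Fin n)}
    {ρ : ∀ q : Quotient π, Setoid {y | Quotient.mk π y = q}} {a b : Fin n}
    (h : glue π ρ a b) : π a b := by
  obtain ⟨q, ha, hb, _⟩ := h
  exact Quotient.exact (ha.trans hb.symm)

end Aux

/-- For `π ∈ IBNC(χ)`, the interval `[0ₙ, π] = {σ ∈ IBNC(χ) : 0ₙ ≤ σ ≤ π}`
(`0ₙ = ⊥` being the partition into `n` singleton blocks) is lattice isomorphic to the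
product `∏_{V block of π} IBNC(χ|_V)` via `σ ↦ (σ|_V)_V` (blocks indexed by `Quotient π`). -/
theorem interval_iso_prod_of_blocks (n : ℕ) (χ : Fin n → Letter)
    (π : Setoid (Fin n)) (hπ : π ∈ IBNC χ) :
    ∃ F : {σ : Setoid (Fin n) // σ ∈ IBNC χ ∧ ⊥ ≤ σ ∧ σ ≤ π} →
        ∀ q : Quotient π, IBNC (restChi {y | Quotient.mk π y = q} χ),
      (∀ (σ : {σ : Setoid (Fin n) // σ ∈ IBNC χ ∧ ⊥ ≤ σ ∧ σ ≤ π}) (q : Quotient π),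
          (F σ q : Setoid {y | Quotient.mk π y = q}) =
            restrict {y | Quotient.mk π y = q} (σ : Setoid (Fin n))) ∧
      Function.Bijective F ∧
      (∀ σ τ : {σ : Setoid (Fin n) // σ ∈ IBNC χ ∧ ⊥ ≤ σ ∧ σ ≤ π}, σ ≤ τ ↔ F σ ≤ F τ) := by
  classical
  obtain ⟨hπnc, hπiv⟩ := hπ
  refine ⟨fun σ q => ⟨restrict _ σ.1, restrict_mem_IBNC χ _ σ.2.1⟩, fun σ q => rfl, ?_, ?_⟩
  · constructor
    · -- injectivity
      intro σ τ h
      apply Subtype.ext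
      apply Setoid.ext
      intro a b
      have key : ∀ σ τ : {σ : Setoid (Fin n) // σ ∈ IBNC χ ∧ ⊥ ≤ σ ∧ σ ≤ π},
          (∀ q, restrict {y | Quotient.mk π y = q} σ.1 =
            restrict {y | Quotient.mk π y = q} τ.1) → σ.1 a b → τ.1 a b := by
        intro σ τ hστ hab
        have hπab : π a b := σ.2.2.2 hab
        have hb : Quotient.mk π b = Quotient.mk π a := (Quotient.sound hπab).symm
        have := Setoid.ext_iff.mp (hστ (Quotient.mk π a))
        exact (this ⟨a, rfl⟩ ⟨b, hb⟩).mp hab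
      have h' : ∀ q, restrict {y | Quotient.mk π y = q} σ.1 =
          restrict {y | Quotient.mk π y = q} τ.1 := by
        intro q
        exact congrArg Subtype.val (congrFun h q)
      exact ⟨key σ τ h', key τ σ (fun q => (h' q).symm)⟩
    · -- surjectivity
      intro ρ
      have hρ : ∀ q, (ρ q : Setoid {y | Quotient.mk π y = q}) ∈
          IBNC (restChi {y | Quotient.mk π y = q} χ) := fun q => (ρ q).2
      set g : Setoid (Fin n) := glue π (fun q => (ρ q).1) with hg
      have hle : g ≤ π := fun a b h => glue_rel_pi h
      have hmem : g ∈ IBNC χ := by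
        constructor
        · -- noncrossing
          intro s₁ r₁ s₂ r₂ h1 h2 h3 hs hr
          obtain ⟨q, hs₁, hs₂, hsr⟩ := hs
          obtain ⟨q', hr₁, hr₂, hrr⟩ := hr
          have hqq : q = q' := by
            have : π s₁ r₁ := hπnc s₁ r₁ s₂ r₂ h1 h2 h3 (glue_rel_pi (ρ := fun q => (ρ q).1) ⟨q, hs₁, hs₂, hsr⟩) (glue_rel_pi (ρ := fun q => (ρ q).1) ⟨q', hr₁, hr₂, hrr⟩)
            rw [← hs₁, ← hr₁]
            exact Quotient.sound this
          subst hqq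
          refine ⟨q, hs₁, hr₁, ?_⟩
          exact (hρ q).1 ⟨s₁, hs₁⟩ ⟨r₁, hr₁⟩ ⟨s₂, hs₂⟩ ⟨r₂, hr₂⟩ h1 h2 h3 hsr hrr
        · -- interval
          intro i j k hij hjk hc hik
          obtain ⟨q, hi, hk, h⟩ := hik
          have hπik : π i k := glue_rel_pi (ρ := fun q => (ρ q).1) ⟨q, hi, hk, h⟩
          have hπij : π i j := hπiv i j k hij hjk hc hπik
          have hj : Quotient.mk π j = q := by rw [← hi]; exact (Quotient.sound hπij).symm
          refine ⟨q, hi, hj, ?_⟩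
          exact (hρ q).2 ⟨i, hi⟩ ⟨j, hj⟩ ⟨k, hk⟩ hij hjk hc h
      refine ⟨⟨g, hmem, bot_le, hle⟩, ?_⟩
      funext q
      apply Subtype.ext
      apply Setoid.ext
      intro x y
      constructor
      · rintro ⟨q', hx, hy, h⟩
        obtain rfl : q = q' := x.2.symm.trans hx
        exact h
      · intro h
        exact ⟨q, x.2, y.2, h⟩
  · -- order
    intro σ τ
    constructor
    · intro h q x y hxy
      exact h hxy
    · intro h a b hab
      have hπab : π a b := σ.2.2.2 hab
      have hb : Quotient.mk π b = Quotient.mk π a := (Quotient.sound hπab).symm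
      exact h (Quotient.mk π a) (show (restrict {y | Quotient.mk π y = Quotient.mk π a} σ.1) ⟨a, rfl⟩ ⟨b, hb⟩ from hab)

end FFB
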